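/- Let q1, q2 : ℝ → ℝ be smooth and nonvanishing, let k0 be a real constant, let k1, r10, r20 be nonzero real constants, set E(t) = exp(k0 ∫₀ᵗ q1(s) ds), and define p1 = k1 q1 E, p2 = −r10 k1 q1 E^{−1}, r1 = r10 E^{−2}, r2 = r20 (q1/q2) E^{−2}. Then the following four quantities are constant in t, with the indicated values: p1 p2/q1² = −r10 k1², p1 q2² r2²/p2³ = −r20²/(r10³ k1²), r1'/(q1 r1) = −2k0, and q1 q2 r2/p2² = r20/(r10² k1²). -/

import Mathlib

noncomputable section

/-! The first, second and fourth quantities are rational expressions in `q₁, q₂, E` in which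
`E` cancels. For the third, the fundamental theorem of calculus gives `E' = k₀ q₁ E`, hence
`r₁ = r₁₀ E⁻²` satisfies `r₁' = -2 k₀ q₁ r₁`. -/

open intervalIntegral

theorem hasDerivAt_exp_const_mul_integral {q : ℝ → ℝ} (hq : Continuous q) (k t : ℝ) :
    HasDerivAt (fun u => Real.exp (k * ∫ s in (0:ℝ)..u, q s))
      (k * q t * Real.exp (k * ∫ s in (0:ℝ)..t, q s)) t := by
  have hI : HasDerivAt (fun u => ∫ s in (0:ℝ)..u, q s) (q t) t :=
    integral_hasDerivAt_right (hq.intervalIntegrable 0 t)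
      (hq.stronglyMeasurableAtFilter _ _) hq.continuousAt
  simpa only [mul_comm] using (hI.const_mul k).exp

theorem HasDerivAt.const_mul_inv_sq {E : ℝ → ℝ} {c t : ℝ}
    (hE : HasDerivAt E (c * E t) t) (hEt : E t ≠ 0) (a : ℝ) :
    HasDerivAt (fun u => a * (E u)⁻¹ ^ 2) (-2 * c * (a * (E t)⁻¹ ^ 2)) t := by
  refine (((hE.inv hEt).fun_pow 2).const_mul a).congr_deriv ?_
  simp only [Pi.inv_apply]
  norm_num
  field_simp

theorem table1_family_constants
    (q1 q2 : ℝ → ℝ)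
    (hq1 : ContDiff ℝ (⊤ : ℕ∞) q1)
    (hq1ne : ∀ t : ℝ, q1 t ≠ 0) (hq2ne : ∀ t : ℝ, q2 t ≠ 0)
    (k0 : ℝ) (k1 r10 r20 : ℝ) (hr10 : r10 ≠ 0)
    (E : ℝ → ℝ) (hE : ∀ t : ℝ, E t = Real.exp (k0 * ∫ s in (0:ℝ)..t, q1 s))
    (p1 p2 r1 r2 : ℝ → ℝ)
    (hp1 : ∀ t : ℝ, p1 t = k1 * q1 t * E t)
    (hp2 : ∀ t : ℝ, p2 t = -r10 * k1 * q1 t * (E t)⁻¹)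
    (hr1 : ∀ t : ℝ, r1 t = r10 * (E t)⁻¹^2)
    (hr2 : ∀ t : ℝ, r2 t = r20 * (q1 t / q2 t) * (E t)⁻¹^2) :
    (∀ t : ℝ, p1 t * p2 t / (q1 t)^2 = -r10 * k1^2)
    ∧ (∀ t : ℝ, p1 t * (q2 t)^2 * (r2 t)^2 / (p2 t)^3 = -r20^2 / (r10^3 * k1^2))
    ∧ (∀ t : ℝ, deriv r1 t / (q1 t * r1 t) = -2 * k0)
    ∧ (∀ t : ℝ, q1 t * q2 t * r2 t / (p2 t)^2 = r20 / (r10^2 * k1^2)) := by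
  have hEne : ∀ t, E t ≠ 0 := fun t => hE t ▸ (Real.exp_pos _).ne'
  have hE' : ∀ t, HasDerivAt E (k0 * q1 t * E t) t := fun t => by
    simpa only [← funext hE, hE t] using hasDerivAt_exp_const_mul_integral hq1.continuous k0 t
  refine ⟨fun t => ?_, fun t => ?_, fun t => ?_, fun t => ?_⟩
  · rw [hp1, hp2]
    field_simp [hq1ne t, hEne t]
  · rw [hp1, hp2, hr2]
    field_simp [hq1ne t, hq2ne t, hEne t]
  · have hr1' : HasDerivAt r1 (-2 * k0 * (q1 t * r1 t)) t := by
      convert (hE' t).const_mul_inv_sq (hEne t) r10 using 1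
      · exact funext hr1
      · rw [hr1]
        ring
    exact div_eq_of_eq_mul (mul_ne_zero (hq1ne t) (by simp [hr1, hr10, hEne t])) hr1'.deriv
  · rw [hp2, hr2]
    field_simp [hq1ne t, hq2ne t, hEne t]
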